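/- Let (X₁, X₂) be jointly Gaussian with means μ₁, μ₂, variances ν₁₁, ν₂₂ > 0 and covariance ν₁₂. Then E[φ(X₁)Φ(X₂)] = (1/√(1+ν₁₁)) · φ(μ₁/√(1+ν₁₁)) · Φ((μ₂/√(1+ν₂₂) - ρ·μ₁/√(1+ν₁₁))/√(1-ρ²)), where ρ = ν₁₂/√((1+ν₁₁)(1+ν₂₂)). -/

import Mathlib

open MeasureTheory ProbabilityTheory Real
open scoped NNReal

noncomputable def npdf (x : ℝ) : ℝ := (Real.sqrt (2 * Real.pi))⁻¹ * Real.exp (-(x ^ 2) / 2)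

noncomputable def ncdf (x : ℝ) : ℝ := ∫ t in Set.Iic x, npdf t

noncomputable def P2 : Measure (ℝ × ℝ) :=
  (ProbabilityTheory.gaussianReal 0 1).prod (ProbabilityTheory.gaussianReal 0 1)

/-!
Write `N(m, v)` for `gaussianReal m v`. For `Z ~ N(0,1)` independent of `Y ~ N(m, v)`,
`E[Φ(p + qY)] = P(Z - qY ≤ p)` and `Z - qY ~ N(-qm, 1 + q²v)`, so
`E[Φ(p + qY)] = Φ((p + qm) / √(1 + q²v))`. This disposes of the second coordinate. For the first,
completing the square turns `φ(μ₁ + a x)` times the standard density into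
`φ(μ₁/√(1+a²)) / √(1+a²)` times the density of `N(-aμ₁/(1+a²), 1/(1+a²))`, and the same formula
applies once more; the rest is algebra with square roots.
-/

open Set

lemma npdf_eq_gaussianPDFReal : npdf = gaussianPDFReal 0 1 := by
  ext x
  simp [npdf, gaussianPDFReal]

@[fun_prop]
lemma measurable_npdf : Measurable npdf :=
  npdf_eq_gaussianPDFReal ▸ measurable_gaussianPDFReal 0 1

lemma npdf_nonneg (x : ℝ) : 0 ≤ npdf x := by
  unfold npdf; positivity

lemma npdf_le (x : ℝ) : npdf x ≤ (√(2 * π))⁻¹ :=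
  mul_le_of_le_one_right (by positivity) (exp_le_one_iff.mpr (by nlinarith [sq_nonneg x]))

lemma ncdf_eq_cdf : ncdf = cdf (gaussianReal 0 1) := by
  ext x
  rw [cdf_eq_real, measureReal_def, gaussianReal_apply_eq_integral _ one_ne_zero,
    ENNReal.toReal_ofReal
      (setIntegral_nonneg measurableSet_Iic fun t _ ↦ gaussianPDFReal_nonneg 0 1 t),
    ncdf, npdf_eq_gaussianPDFReal]

@[fun_prop]
lemma measurable_ncdf : Measurable ncdf :=
  ncdf_eq_cdf ▸ (cdf _).mono.measurable

lemma integrable_npdf_comp_mul_ncdf_comp {α : Type*} [MeasurableSpace α] {μ : Measure α}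
    [IsFiniteMeasure μ] {f g : α → ℝ} (hf : Measurable f) (hg : Measurable g) :
    Integrable (fun w ↦ npdf (f w) * ncdf (g w)) μ := by
  refine .of_bound (by fun_prop) ((√(2 * π))⁻¹) (ae_of_all _ fun w ↦ ?_)
  rw [ncdf_eq_cdf, norm_mul, norm_of_nonneg (npdf_nonneg _), norm_of_nonneg (cdf_nonneg _ _)]
  exact (mul_le_of_le_one_right (npdf_nonneg _) (cdf_le_one _ _)).trans (npdf_le _)

lemma measureReal_gaussianReal_Iic (μ : ℝ) {v : ℝ≥0} (hv : v ≠ 0) (x : ℝ) :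
    (gaussianReal μ v).real (Iic x) = ncdf ((x - μ) / √v) := by
  have hσ : 0 < √(v : ℝ) := by positivity
  have hmap : (gaussianReal 0 1).map (fun z ↦ μ + √v * z) = gaussianReal μ v := by
    rw [← Function.comp_def (μ + ·) (√v * ·), ← Measure.map_map (measurable_const_add μ)
      (measurable_const_mul _), gaussianReal_map_const_mul, gaussianReal_map_const_add]
    congr 1
    · ring
    · ext; simp
  have hpre : (fun z ↦ μ + √v * z) ⁻¹' Iic x = Iic ((x - μ) / √v) := by
    ext z
    simp [le_div_iff₀ hσ, mul_comm, le_sub_iff_add_le']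
  rw [← hmap, map_measureReal_apply (by fun_prop) measurableSet_Iic, hpre, ncdf_eq_cdf,
    cdf_eq_real]

lemma gaussianReal_prod_map_add_mul (m₁ m₂ q : ℝ) (v₁ v₂ : ℝ≥0) :
    ((gaussianReal m₁ v₁).prod (gaussianReal m₂ v₂)).map (fun w ↦ w.1 + q * w.2)
      = gaussianReal (m₁ + q * m₂) (v₁ + .mk (q ^ 2) (sq_nonneg q) * v₂) := by
  rw [← gaussianReal_conv_gaussianReal, ← gaussianReal_map_const_mul, Measure.conv,
    ← Measure.map_id (μ := gaussianReal m₁ v₁), Measure.map_prod_map _ _ measurable_id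
      (measurable_const_mul q), Measure.map_map (by fun_prop) (by fun_prop), Measure.map_id]
  rfl

lemma integral_ncdf_add_mul_gaussianReal (p q m : ℝ) (v : ℝ≥0) :
    ∫ y, ncdf (p + q * y) ∂gaussianReal m v = ncdf ((p + q * m) / √(1 + q ^ 2 * v)) := by
  let f : ℝ × ℝ → ℝ := fun w ↦ w.1 + -q * w.2
  have hf : Measurable f := by fun_prop
  have hS : MeasurableSet (f ⁻¹' Iic p) := hf measurableSet_Iic
  have hslice : ∀ y, ncdf (p + q * y)
      = (gaussianReal 0 1 ((fun z ↦ (z, y)) ⁻¹' (f ⁻¹' Iic p))).toReal := by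
    intro y
    rw [ncdf_eq_cdf, cdf_eq_real, measureReal_def]
    congr 2
    ext z
    simp [f, ← sub_eq_add_neg]
  calc ∫ y, ncdf (p + q * y) ∂gaussianReal m v
      = ((gaussianReal 0 1).prod (gaussianReal m v) (f ⁻¹' Iic p)).toReal := by
        simp_rw [hslice]
        rw [integral_toReal (measurable_measure_prodMk_right hS).aemeasurable
          (ae_of_all _ fun _ ↦ measure_lt_top _ _), Measure.prod_apply_symm hS]
    _ = (((gaussianReal 0 1).prod (gaussianReal m v)).map f).real (Iic p) :=
        (map_measureReal_apply hf measurableSet_Iic).symm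
    _ = ncdf ((p + q * m) / √(1 + q ^ 2 * v)) := by
        rw [gaussianReal_prod_map_add_mul, measureReal_gaussianReal_Iic _ (by positivity)]
        congr 2
        · ring
        · push_cast; rw [neg_sq]

lemma gaussianPDFReal_mul_npdf_add_mul (μ a x : ℝ) :
    gaussianPDFReal 0 1 x * npdf (μ + a * x)
      = (√(1 + a ^ 2))⁻¹ * npdf (μ / √(1 + a ^ 2)) *
          gaussianPDFReal (-(a * μ) / (1 + a ^ 2)) (1 + .mk (a ^ 2) (sq_nonneg a))⁻¹ x := by
  have hs : 0 < 1 + a ^ 2 := by positivity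
  have hsqrt : √(2 * π * (1 + a ^ 2)⁻¹) = √(2 * π) * (√(1 + a ^ 2))⁻¹ := by
    rw [sqrt_mul (by positivity), sqrt_inv]
  simp only [gaussianPDFReal, npdf, NNReal.coe_inv, NNReal.coe_add, NNReal.coe_one,
    NNReal.coe_mk, hsqrt, div_pow, sq_sqrt hs.le, mul_one, sub_zero]
  rw [mul_mul_mul_comm, ← exp_add, mul_assoc _ (_ * _), mul_mul_mul_comm _ (rexp _), ← exp_add]
  have hexp : -x ^ 2 / 2 + -(μ + a * x) ^ 2 / 2
      = -(μ ^ 2 / (1 + a ^ 2)) / 2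
        + -(x - -(a * μ) / (1 + a ^ 2)) ^ 2 / (2 * (1 + a ^ 2)⁻¹) := by
    field_simp
    ring
  rw [hexp]
  field_simp

lemma integral_npdf_add_mul_mul_gaussianReal (μ a : ℝ) (g : ℝ → ℝ) :
    ∫ x, npdf (μ + a * x) * g x ∂gaussianReal 0 1
      = (√(1 + a ^ 2))⁻¹ * npdf (μ / √(1 + a ^ 2)) *
          ∫ x, g x ∂gaussianReal (-(a * μ) / (1 + a ^ 2)) (1 + .mk (a ^ 2) (sq_nonneg a))⁻¹ := by
  rw [integral_gaussianReal_eq_integral_smul one_ne_zero,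
    integral_gaussianReal_eq_integral_smul (inv_ne_zero (by positivity)), ← integral_const_mul]
  congr 1
  ext x
  rw [smul_eq_mul, smul_eq_mul, ← mul_assoc, gaussianPDFReal_mul_npdf_add_mul, mul_assoc]

lemma tilted_arg_eq_correlated_arg (μ₁ μ₂ a b c : ℝ) :
    (μ₂ / √(1 + c ^ 2) + b / √(1 + c ^ 2) * (-(a * μ₁) / (1 + a ^ 2))) /
        √(1 + (b / √(1 + c ^ 2)) ^ 2 * (1 + a ^ 2)⁻¹)
      = (μ₂ / √(1 + (b ^ 2 + c ^ 2)) -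
          a * b / √((1 + a ^ 2) * (1 + (b ^ 2 + c ^ 2))) * (μ₁ / √(1 + a ^ 2))) /
        √(1 - (a * b / √((1 + a ^ 2) * (1 + (b ^ 2 + c ^ 2)))) ^ 2) := by
  have hs2 : √(1 + a ^ 2) ^ 2 = 1 + a ^ 2 := sq_sqrt (by positivity)
  have ht2 : √(1 + c ^ 2) ^ 2 = 1 + c ^ 2 := sq_sqrt (by positivity)
  have hw2 : √(1 + (b ^ 2 + c ^ 2)) ^ 2 = 1 + (b ^ 2 + c ^ 2) := sq_sqrt (by positivity)
  have hd2 : √((1 + a ^ 2) * (1 + c ^ 2) + b ^ 2) ^ 2 = (1 + a ^ 2) * (1 + c ^ 2) + b ^ 2 :=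
    sq_sqrt (by positivity)
  have hs : 0 < √(1 + a ^ 2) := by positivity
  have ht : 0 < √(1 + c ^ 2) := by positivity
  have hw : 0 < √(1 + (b ^ 2 + c ^ 2)) := by positivity
  have hd : 0 < √((1 + a ^ 2) * (1 + c ^ 2) + b ^ 2) := by positivity
  rw [sqrt_mul (by positivity)]
  generalize √(1 + a ^ 2) = s at *
  generalize √(1 + c ^ 2) = t at *
  generalize √(1 + (b ^ 2 + c ^ 2)) = w at *
  generalize √((1 + a ^ 2) * (1 + c ^ 2) + b ^ 2) = d at *
  have h1 : √(1 + (b / t) ^ 2 * (1 + a ^ 2)⁻¹) = d / (t * s) := by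
    rw [sqrt_eq_iff_mul_self_eq_of_pos (by positivity)]
    field_simp
    linear_combination
      (1 + a ^ 2) * hd2 - (t ^ 2 * (1 + a ^ 2) + b ^ 2) * hs2 - (1 + a ^ 2) ^ 2 * ht2
  have h2 : √(1 - (a * b / (s * w)) ^ 2) = d / (s * w) := by
    rw [sqrt_eq_iff_mul_self_eq_of_pos (by positivity)]
    field_simp
    linear_combination hd2 - w ^ 2 * hs2 - (1 + a ^ 2) * hw2
  rw [h1, h2]
  field_simp
  linear_combination -(a * b * μ₁) * hs2

theorem gaussian_expectation_npdf_mul_ncdf_general (μ₁ μ₂ ν₁₁ ν₂₂ ν₁₂ a b c ρ : ℝ)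
    (h11 : ν₁₁ = a ^ 2) (h22 : ν₂₂ = b ^ 2 + c ^ 2) (h12 : ν₁₂ = a * b)
    (hρ : ρ = ν₁₂ / Real.sqrt ((1 + ν₁₁) * (1 + ν₂₂))) :
    ∫ w : ℝ × ℝ, npdf (μ₁ + a * w.1) * ncdf (μ₂ + b * w.1 + c * w.2) ∂P2
      = (Real.sqrt (1 + ν₁₁))⁻¹ * npdf (μ₁ / Real.sqrt (1 + ν₁₁)) *
          ncdf ((μ₂ / Real.sqrt (1 + ν₂₂) - ρ * (μ₁ / Real.sqrt (1 + ν₁₁))) /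
            Real.sqrt (1 - ρ ^ 2)) := by
  subst h11 h22 h12 hρ
  have : IsProbabilityMeasure P2 := by unfold P2; infer_instance
  have hint := integrable_npdf_comp_mul_ncdf_comp (μ := P2)
    (f := fun w : ℝ × ℝ ↦ μ₁ + a * w.1) (g := fun w ↦ μ₂ + b * w.1 + c * w.2)
    (by fun_prop) (by fun_prop)
  have hinner (x : ℝ) : ∫ y, ncdf (μ₂ + b * x + c * y) ∂gaussianReal 0 1
      = ncdf (μ₂ / √(1 + c ^ 2) + b / √(1 + c ^ 2) * x) := by
    rw [integral_ncdf_add_mul_gaussianReal]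
    congr 1
    simp only [mul_zero, add_zero, NNReal.coe_one, mul_one]
    ring
  rw [P2, integral_prod _ hint]
  simp_rw [integral_const_mul, hinner]
  rw [integral_npdf_add_mul_mul_gaussianReal, integral_ncdf_add_mul_gaussianReal]
  congr 2
  push_cast
  exact tilted_arg_eq_correlated_arg μ₁ μ₂ a b c

theorem gaussian_expectation_npdf_mul_ncdf (μ₁ μ₂ ν₁₁ ν₂₂ ν₁₂ a b c ρ : ℝ)
    (h11 : ν₁₁ = a ^ 2) (h22 : ν₂₂ = b ^ 2 + c ^ 2) (h12 : ν₁₂ = a * b)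
    (hp1 : 0 < ν₁₁) (hp2 : 0 < ν₂₂)
    (hρ : ρ = ν₁₂ / Real.sqrt ((1 + ν₁₁) * (1 + ν₂₂))) :
    ∫ w : ℝ × ℝ, npdf (μ₁ + a * w.1) * ncdf (μ₂ + b * w.1 + c * w.2) ∂P2
      = (Real.sqrt (1 + ν₁₁))⁻¹ * npdf (μ₁ / Real.sqrt (1 + ν₁₁)) *
          ncdf ((μ₂ / Real.sqrt (1 + ν₂₂) - ρ * (μ₁ / Real.sqrt (1 + ν₁₁))) /
            Real.sqrt (1 - ρ ^ 2)) :=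
  gaussian_expectation_npdf_mul_ncdf_general μ₁ μ₂ ν₁₁ ν₂₂ ν₁₂ a b c ρ h11 h22 h12 hρ
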